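/- arXiv:2407.06956 — 3 statements merged into one kernel-verified Lean document; each statement's English description precedes it below -/
import Mathlib

section
/- The ind-completion of a preorder X, consisting of directed families in X ordered by the exceeds relation, has suprema of directed families: given a directed family of directed families α : I → Ind(X), the family α̂ : (Σ i, J i) → X, (i,j) ↦ α i j is directed and is a least upper bound with respect to ≲. -/
universe u

/-- `Exceeds α β` (written `α ≲ β`): `β` exceeds `α`, i.e. every member of `α`
is below some member of `β`. -/
def Exceeds {X : Type u} [Preorder X] {A B : Type u} (α : A → X) (β : B → X) : Prop :=
  ∀ a, ∃ b, α a ≤ β b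

section SigmaFamily

variable {X : Type u} [Preorder X] {I : Type u} {J : I → Type u} (f : ∀ i, J i → X)

theorem directed_sigma_of_exceeds (hdir : ∀ i, Directed (· ≤ ·) (f i))
    (hsemi : ∀ i₁ i₂, ∃ i, Exceeds (f i₁) (f i) ∧ Exceeds (f i₂) (f i)) :
    Directed (· ≤ ·) (fun p : Σ i, J i => f p.1 p.2) := by
  rintro ⟨i₁, j₁⟩ ⟨i₂, j₂⟩
  obtain ⟨i, h₁, h₂⟩ := hsemi i₁ i₂
  obtain ⟨k₁, hk₁⟩ := h₁ j₁
  obtain ⟨k₂, hk₂⟩ := h₂ j₂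
  obtain ⟨k, hk₁k, hk₂k⟩ := hdir i k₁ k₂
  exact ⟨⟨i, k⟩, hk₁.trans hk₁k, hk₂.trans hk₂k⟩

theorem exceeds_sigma (i : I) : Exceeds (f i) (fun p : Σ i, J i => f p.1 p.2) :=
  fun j => ⟨⟨i, j⟩, le_rfl⟩

theorem sigma_exceeds_of_forall {K : Type u} {β : K → X} (h : ∀ i, Exceeds (f i) β) :
    Exceeds (fun p : Σ i, J i => f p.1 p.2) β :=
  fun p => h p.1 p.2

end SigmaFamily

theorem stmt10_general {X : Type u} [Preorder X] (I : Type u) (J : I → Type u)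
    (f : ∀ i, J i → X)
    (hdir : ∀ i, Directed (· ≤ ·) (f i))
    (hsemi : ∀ i₁ i₂, ∃ i, Exceeds (f i₁) (f i) ∧ Exceeds (f i₂) (f i)) :
    Directed (· ≤ ·) (fun p : Σ i, J i => f p.1 p.2) ∧
    (∀ i, Exceeds (f i) (fun p : Σ i, J i => f p.1 p.2)) ∧
    (∀ (K : Type u) (β : K → X), Directed (· ≤ ·) β →
      (∀ i, Exceeds (f i) β) → Exceeds (fun p : Σ i, J i => f p.1 p.2) β) :=
  ⟨directed_sigma_of_exceeds f hdir hsemi, exceeds_sigma f,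
    fun _ _ _ h => sigma_exceeds_of_forall f h⟩

theorem stmt10 {X : Type u} [Preorder X] (I : Type u) (J : I → Type u)
    (f : ∀ i, J i → X) (hI : Nonempty I) (hJ : ∀ i, Nonempty (J i))
    (hdir : ∀ i, Directed (· ≤ ·) (f i))
    (hsemi : ∀ i₁ i₂, ∃ i, Exceeds (f i₁) (f i) ∧ Exceeds (f i₂) (f i)) :
    Directed (· ≤ ·) (fun p : Σ i, J i => f p.1 p.2) ∧
    (∀ i, Exceeds (f i) (fun p : Σ i, J i => f p.1 p.2)) ∧
    (∀ (K : Type u) (β : K → X), Directed (· ≤ ·) β →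
      (∀ i, Exceeds (f i) β) → Exceeds (fun p : Σ i, J i => f p.1 p.2) β) :=
  stmt10_general I J f hdir hsemi
end

section
/- For a dcpo D, a directed family α : I → D approximates an element x (i.e., ⨆ α = x and α i ≪ x for all i) if and only if α is left adjunct to x (i.e., for every directed family β, α ≲ β ↔ x ⊑ ⨆ β). -/
universe u

/-- A partial order is a dcpo if every nonempty directed family (indexed in the
same universe) has a least upper bound. -/
def IsDcpo (D : Type u) [PartialOrder D] : Prop :=
  ∀ (I : Type u) (α : I → D), Nonempty I → Directed (· ≤ ·) α →
    ∃ s, IsLUB (Set.range α) s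

/-- `x` is way below `y`: every nonempty directed family whose supremum
dominates `y` has a member dominating `x`. -/
def WayBelow {D : Type u} [PartialOrder D] (x y : D) : Prop :=
  ∀ (I : Type u) (α : I → D), Nonempty I → Directed (· ≤ ·) α →
    ∀ s, IsLUB (Set.range α) s → y ≤ s → ∃ i, x ≤ α i

/-! The forward direction is the definition of `≪` together with the fact that `α ≲ β` forces
`⨆ α ≤ ⨆ β`. Conversely, testing the adjunction against the constant family `x` shows that `x`
bounds `α`, and testing it against `α` itself shows `x ≤ ⨆ α`; the way-below property is then
the adjunction read from right to left. -/

open Set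

section Exceeds

variable {X : Type u} [Preorder X] {A B : Type u} {α : A → X} {β : B → X} {x t : X}

theorem exceeds_refl : Exceeds α α := fun a => ⟨a, le_rfl⟩

theorem Exceeds.le_of_isLUB (h : Exceeds α β) (hx : IsLUB (range α) x)
    (ht : t ∈ upperBounds (range β)) : x ≤ t :=
  hx.2 <| forall_mem_range.2 fun a =>
    let ⟨b, hb⟩ := h a
    hb.trans (ht (mem_range_self b))

end Exceeds

def IsLeftAdjunct {D : Type u} [PartialOrder D] {I : Type u} (α : I → D) (x : D) : Prop :=
  ∀ (J : Type u) (β : J → D), Nonempty J → Directed (· ≤ ·) β →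
    ∀ t, IsLUB (range β) t → (Exceeds α β ↔ x ≤ t)

section

variable {D : Type u} [PartialOrder D] {I : Type u} {α : I → D} {x : D}

theorem isLeftAdjunct_of_isLUB_of_wayBelow (hx : IsLUB (range α) x)
    (hwb : ∀ i, WayBelow (α i) x) : IsLeftAdjunct α x :=
  fun J β hJ hβ t ht =>
    ⟨fun h => h.le_of_isLUB hx ht.1, fun hxt i => hwb i J β hJ hβ t ht hxt⟩

namespace IsLeftAdjunct

theorem wayBelow (h : IsLeftAdjunct α x) (i : I) : WayBelow (α i) x :=
  fun J β hJ hβ t ht hxt => (h J β hJ hβ t ht).2 hxt i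

theorem mem_upperBounds [Nonempty I] (h : IsLeftAdjunct α x) : x ∈ upperBounds (range α) := by
  have hconst : IsLUB (range fun _ : I => x) x := by
    rw [range_const]
    exact isLUB_singleton
  have hexceeds : Exceeds α fun _ : I => x :=
    (h I _ inferInstance (fun i _ => ⟨i, le_rfl, le_rfl⟩) x hconst).2 le_rfl
  exact forall_mem_range.2 fun i => (hexceeds i).choose_spec

theorem isLUB (hD : IsDcpo D) [hne : Nonempty I] (hdir : Directed (· ≤ ·) α)
    (h : IsLeftAdjunct α x) : IsLUB (range α) x := by
  obtain ⟨s, hs⟩ := hD I α hne hdir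
  have hxs : x ≤ s := (h I α hne hdir s hs).1 exceeds_refl
  exact ⟨h.mem_upperBounds, fun y hy => hxs.trans (hs.2 hy)⟩

end IsLeftAdjunct

end

theorem stmt11 {D : Type u} [PartialOrder D] (hD : IsDcpo D) (x : D)
    (I : Type u) (α : I → D) (hne : Nonempty I) (hdir : Directed (· ≤ ·) α) :
    (IsLUB (Set.range α) x ∧ ∀ i, WayBelow (α i) x) ↔
      (∀ (J : Type u) (β : J → D), Nonempty J → Directed (· ≤ ·) β →
        ∀ t, IsLUB (Set.range β) t → (Exceeds α β ↔ x ≤ t)) :=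
  ⟨fun ⟨hx, hwb⟩ => isLeftAdjunct_of_isLUB_of_wayBelow hx hwb,
    fun h => ⟨IsLeftAdjunct.isLUB hD hdir h, IsLeftAdjunct.wayBelow h⟩⟩
end

section
/- If D is a Scott continuous retract of a continuous dcpo E (via section s : D → E and retraction r : E → D with r ∘ s = id), then D is continuous: for each x : D, the family r ∘ α_{s(x)} is directed, has supremum x, and each of its members is way below x. -/
universe u

/-- Scott continuity: `f` sends suprema of nonempty directed families to
suprema of the image families. -/
def ScottCont {D E : Type u} [PartialOrder D] [PartialOrder E] (f : D → E) : Prop :=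
  ∀ (I : Type u) (α : I → D) (s : D), Nonempty I → Directed (· ≤ ·) α →
    IsLUB (Set.range α) s → IsLUB (Set.range (f ∘ α)) (f s)

theorem ScottCont.monotone {D E : Type u} [PartialOrder D] [PartialOrder E] {f : D → E}
    (hf : ScottCont f) : Monotone f := by
  intro a b hab
  -- `b` is the supremum of the directed pair `{a, b}`.
  let β : ULift.{u} Bool → D := fun i => cond i.down b a
  have hβ_le : ∀ i, β i ≤ b := fun ⟨i⟩ => by cases i <;> simp [β, hab]
  have hdir : Directed (· ≤ ·) β := fun i j => ⟨⟨true⟩, hβ_le i, hβ_le j⟩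
  have hlub : IsLUB (Set.range β) b :=
    ⟨Set.forall_mem_range.2 hβ_le, fun _ hc => hc ⟨⟨true⟩, rfl⟩⟩
  exact (hf _ β b ⟨⟨true⟩⟩ hdir hlub).1 ⟨⟨false⟩, rfl⟩

theorem WayBelow.retract {D E : Type u} [PartialOrder D] [PartialOrder E]
    {s : D → E} {r : E → D} (hs : ScottCont s) (hr : Monotone r) (hrs : ∀ x, r (s x) = x)
    {a : E} {x : D} (h : WayBelow a (s x)) : WayBelow (r a) x := by
  intro J β hJ hβ t ht hxt
  obtain ⟨j, hj⟩ := h J (s ∘ β) hJ (hβ.mono_comp _ fun _ _ h => hs.monotone h)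
    (s t) (hs J β t hJ hβ ht) (hs.monotone hxt)
  exact ⟨j, hrs (β j) ▸ hr hj⟩

theorem stmt17_general {D E : Type u} [PartialOrder D] [PartialOrder E]
    (s : D → E) (r : E → D) (hs : ScottCont s) (hr : ScottCont r)
    (hrs : ∀ x, r (s x) = x)
    (I : E → Type u) (α : ∀ e, I e → E)
    (hne : ∀ e, Nonempty (I e)) (hdir : ∀ e, Directed (· ≤ ·) (α e))
    (hlub : ∀ e, IsLUB (Set.range (α e)) e)
    (hwb : ∀ e i, WayBelow (α e i) e)
    (x : D) :
    Directed (· ≤ ·) (r ∘ α (s x)) ∧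
    IsLUB (Set.range (r ∘ α (s x))) x ∧
    (∀ i, WayBelow (r (α (s x) i)) x) := by
  refine ⟨(hdir (s x)).mono_comp _ fun _ _ h => hr.monotone h, ?_,
    fun i => (hwb (s x) i).retract hs hr.monotone hrs⟩
  simpa only [hrs] using hr _ _ (s x) (hne _) (hdir _) (hlub _)

theorem stmt17 {D E : Type u} [PartialOrder D] [PartialOrder E]
    (hD : IsDcpo D) (hE : IsDcpo E)
    (s : D → E) (r : E → D) (hs : ScottCont s) (hr : ScottCont r)
    (hrs : ∀ x, r (s x) = x)
    (I : E → Type u) (α : ∀ e, I e → E)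
    (hne : ∀ e, Nonempty (I e)) (hdir : ∀ e, Directed (· ≤ ·) (α e))
    (hlub : ∀ e, IsLUB (Set.range (α e)) e)
    (hwb : ∀ e i, WayBelow (α e i) e)
    (x : D) :
    Directed (· ≤ ·) (r ∘ α (s x)) ∧
    IsLUB (Set.range (r ∘ α (s x))) x ∧
    (∀ i, WayBelow (r (α (s x) i)) x) :=
  stmt17_general s r hs hr hrs I α hne hdir hlub hwb x
end
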